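/- arXiv:1208.0493 — 3 statements merged into one kernel-verified Lean document; each statement's English description precedes it below -/
import Mathlib

section
/- Let N ⊆ ℝ^n be a compact convex set with nonempty interior such that every point on the boundary of N is an extreme point of N. Suppose further that all extreme points of N lie on a common ellipsoid {x : |W(x − c)| = r} for some invertible linear map W, center c, and r > 0. Then N equals the solid ellipsoid {x : |W(x − c)| ≤ r}. -/
/-!
By Krein–Milman, `N` is the closed convex hull of its extreme points, so it lies in the solid
ellipsoid `B`. Conversely, the frontier of `N` consists of extreme points, which lie on the
boundary ellipsoid, so it misses the interior of `B`. The interior of `B` is connected and meets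
the interior of `N`, hence it is contained in `N`; taking closures gives `B ⊆ N`.
-/

open Set Metric

section Convex

variable {E : Type*} [AddCommGroup E] [Module ℝ E] [TopologicalSpace E]
  [IsTopologicalAddGroup E] [ContinuousSMul ℝ E]

theorem IsCompact.subset_of_extremePoints_subset [T2Space E] [LocallyConvexSpace ℝ E]
    {K B : Set E} (hK : IsCompact K) (hKc : Convex ℝ K) (hB : IsClosed B) (hBc : Convex ℝ B)
    (h : K.extremePoints ℝ ⊆ B) : K ⊆ B :=
  closure_convexHull_extremePoints hK hKc ▸ closure_minimal (convexHull_min h hBc) hB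

theorem Convex.subset_of_disjoint_frontier_interior {N B : Set E} (hN : IsClosed N)
    (hB : Convex ℝ B) (hNB : N ⊆ B) (hint : (interior N).Nonempty)
    (hfr : Disjoint (frontier N) (interior B)) : B ⊆ N := by
  obtain ⟨x, hx⟩ := hint
  have hBN : interior B ⊆ interior N := by
    refine hB.interior.isPreconnected.subset_of_closure_inter_subset isOpen_interior
      ⟨x, interior_mono hNB hx, hx⟩ ?_
    rintro y ⟨hycl, hyB⟩
    have hyN : y ∈ interior N ∪ frontier N :=
      closure_eq_interior_union_frontier N ▸ closure_mono interior_subset hycl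
    exact hyN.resolve_right fun hyfr => hfr.notMem_of_mem_left hyfr hyB
  calc B ⊆ closure (interior B) := by
        rw [hB.closure_interior_eq_closure_of_nonempty_interior ⟨x, interior_mono hNB hx⟩]
        exact subset_closure
    _ ⊆ closure N := closure_mono (hBN.trans interior_subset)
    _ = N := hN.closure_eq

end Convex

section Ellipsoid

variable {E F : Type*} [NormedAddCommGroup E] [NormedSpace ℝ E]
  [NormedAddCommGroup F] [NormedSpace ℝ F]

theorem convex_setOf_norm_map_sub_le (W : E →ₗ[ℝ] F) (c : E) (r : ℝ) :
    Convex ℝ {x | ‖W (x - c)‖ ≤ r} := by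
  convert ((convex_closedBall 0 r).linear_preimage W).translate_preimage_right (-c) using 1
  ext; simp [sub_eq_neg_add]

theorem isClosed_setOf_norm_map_sub_le (W : E →L[ℝ] F) (c : E) (r : ℝ) :
    IsClosed {x | ‖W (x - c)‖ ≤ r} :=
  isClosed_le (by fun_prop) continuous_const

theorem interior_setOf_norm_map_sub_le (W : E ≃L[ℝ] F) (c : E) {r : ℝ} (hr : r ≠ 0) :
    interior {x | ‖W (x - c)‖ ≤ r} = {x | ‖W (x - c)‖ < r} := by
  let h : E ≃ₜ F := (Homeomorph.subRight c).trans W.toHomeomorph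
  have hB : {x | ‖W (x - c)‖ ≤ r} = h ⁻¹' closedBall 0 r := by ext; simp [h]
  rw [hB, ← h.preimage_interior, interior_closedBall 0 hr]
  ext; simp [h]

end Ellipsoid

/-- A compact convex body all of whose boundary points are extreme and whose
extreme points lie on a common ellipsoid `{x : |W(x−c)| = r}` is the solid
ellipsoid `{x : |W(x−c)| ≤ r}`. -/
theorem stmt_11 (n : ℕ) (N : Set (EuclideanSpace ℝ (Fin n)))
    (hcompact : IsCompact N) (hconv : Convex ℝ N)
    (hint : (interior N).Nonempty)
    (hext : ∀ x ∈ frontier N, x ∈ Set.extremePoints ℝ N)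
    (W : EuclideanSpace ℝ (Fin n) ≃ₗ[ℝ] EuclideanSpace ℝ (Fin n))
    (c : EuclideanSpace ℝ (Fin n)) (r : ℝ) (hr : 0 < r)
    (hell : ∀ x ∈ Set.extremePoints ℝ N, ‖W (x - c)‖ = r) :
    N = {x | ‖W (x - c)‖ ≤ r} := by
  set W' := W.toContinuousLinearEquiv
  change N = {x | ‖W' (x - c)‖ ≤ r}
  change ∀ x ∈ _, ‖W' (x - c)‖ = r at hell
  have hBc := convex_setOf_norm_map_sub_le W'.toLinearEquiv.toLinearMap c r
  have hBcl := isClosed_setOf_norm_map_sub_le W'.toContinuousLinearMap c r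
  have hBint := interior_setOf_norm_map_sub_le W' c hr.ne'
  have hNB : N ⊆ {x | ‖W' (x - c)‖ ≤ r} :=
    hcompact.subset_of_extremePoints_subset hconv hBcl hBc fun x hx => (hell x hx).le
  have hfr : Disjoint (frontier N) (interior {x | ‖W' (x - c)‖ ≤ r}) := by
    rw [hBint]
    exact disjoint_left.2 fun x hx hlt => (hell x (hext x hx)).not_lt hlt
  exact hNB.antisymm (hBc.subset_of_disjoint_frontier_interior hcompact.isClosed hNB hint hfr)
end

section
/- If a convex set S ⊆ ℝ^k satisfying No Simultaneous Encoding (as above, with all effects observable) has three perfectly distinguishable normalized states ω₁, ω₂, ω₃ (i.e., there exist effects E₁, E₂, E₃ with Eᵢ(ωⱼ) = δ_{ij} and E₁ + E₂ + E₃ = U), then a contradiction arises; hence the gbit has at most two perfectly distinguishable states. -/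
/-!
Relabel the three states as four: `ω₁` for both values of the second bit when the first bit is
`0`, and `ω₂`, `ω₃` when it is `1`. The effect `E₁` then decodes the first bit perfectly, so
No Simultaneous Encoding forbids any effect from telling `ω₂` and `ω₃` apart, whereas `E₂`
does.
-/

/-- No Simultaneous Encoding for a state space `S`: if an effect `E` decodes
the bit `a` perfectly from the four states `ω a a'`, then no effect reveals
anything about `a'`. -/
def NoSimultaneousEncoding (k : ℕ) (S : Set (Fin k → ℝ)) : Prop :=
  ∀ ω : Bool → Bool → (Fin k → ℝ), (∀ a a', ω a a' ∈ S) →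
    ∀ E : (Fin k → ℝ) →ₗ[ℝ] ℝ, (∀ s ∈ S, E s ∈ Set.Icc (0 : ℝ) 1) →
      (∀ a a', E (ω a a') = if a = false then 1 else 0) →
      ∀ E' : (Fin k → ℝ) →ₗ[ℝ] ℝ, (∀ s ∈ S, E' s ∈ Set.Icc (0 : ℝ) 1) →
        ∀ a, E' (ω a false) = E' (ω a true)

theorem NoSimultaneousEncoding.apply_eq_of_isolating_effect {k : ℕ} {S : Set (Fin k → ℝ)}
    (hNSE : NoSimultaneousEncoding k S) {ω₁ ω₂ ω₃ : Fin k → ℝ}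
    (h1 : ω₁ ∈ S) (h2 : ω₂ ∈ S) (h3 : ω₃ ∈ S) {E : (Fin k → ℝ) →ₗ[ℝ] ℝ}
    (hE : ∀ s ∈ S, E s ∈ Set.Icc (0 : ℝ) 1) (hE₁ : E ω₁ = 1) (hE₂ : E ω₂ = 0) (hE₃ : E ω₃ = 0)
    {E' : (Fin k → ℝ) →ₗ[ℝ] ℝ} (hE' : ∀ s ∈ S, E' s ∈ Set.Icc (0 : ℝ) 1) :
    E' ω₂ = E' ω₃ := by
  let ω : Bool → Bool → (Fin k → ℝ) := fun a a' => cond a (cond a' ω₃ ω₂) ω₁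
  have hω : ∀ a a', ω a a' ∈ S := by
    rintro (_ | _) (_ | _) <;> assumption
  have hdecode : ∀ a a', E (ω a a') = if a = false then 1 else 0 := by
    rintro (_ | _) (_ | _) <;> simpa [ω]
  exact hNSE ω hω E hE hdecode E' hE' true

theorem stmt_14_general (k : ℕ) (S : Set (Fin k → ℝ))
    (hNSE : NoSimultaneousEncoding k S)
    (ω₁ ω₂ ω₃ : Fin k → ℝ) (h1 : ω₁ ∈ S) (h2 : ω₂ ∈ S) (h3 : ω₃ ∈ S)
    (E₁ E₂ E₃ : (Fin k → ℝ) →ₗ[ℝ] ℝ)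
    (hE1 : ∀ s ∈ S, E₁ s ∈ Set.Icc (0 : ℝ) 1)
    (hE2 : ∀ s ∈ S, E₂ s ∈ Set.Icc (0 : ℝ) 1)
    (hdist : ∀ i j : Fin 3, (![E₁, E₂, E₃] i) (![ω₁, ω₂, ω₃] j)
      = if i = j then 1 else 0) :
    False := by
  have h11 : E₁ ω₁ = 1 := by simpa using hdist 0 0
  have h12 : E₁ ω₂ = 0 := by simpa using hdist 0 1
  have h13 : E₁ ω₃ = 0 := by simpa using hdist 0 2
  have h22 : E₂ ω₂ = 1 := by simpa using hdist 1 1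
  have h23 : E₂ ω₃ = 0 := by simpa using hdist 1 2
  have h2eq3 : E₂ ω₂ = E₂ ω₃ :=
    hNSE.apply_eq_of_isolating_effect h1 h2 h3 hE1 h11 h12 h13 hE2
  exact one_ne_zero (h22.symm.trans (h2eq3.trans h23))

/-- A state space satisfying No Simultaneous Encoding cannot have three
perfectly distinguishable normalized states: the gbit carries at most one
classical bit. -/
theorem stmt_14 (k : ℕ) (S : Set (Fin k → ℝ)) (hconv : Convex ℝ S)
    (U : (Fin k → ℝ) →ₗ[ℝ] ℝ)
    (hNSE : NoSimultaneousEncoding k S)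
    (ω₁ ω₂ ω₃ : Fin k → ℝ) (h1 : ω₁ ∈ S) (h2 : ω₂ ∈ S) (h3 : ω₃ ∈ S)
    (hn1 : U ω₁ = 1) (hn2 : U ω₂ = 1) (hn3 : U ω₃ = 1)
    (E₁ E₂ E₃ : (Fin k → ℝ) →ₗ[ℝ] ℝ)
    (hE1 : ∀ s ∈ S, E₁ s ∈ Set.Icc (0 : ℝ) 1)
    (hE2 : ∀ s ∈ S, E₂ s ∈ Set.Icc (0 : ℝ) 1)
    (hE3 : ∀ s ∈ S, E₃ s ∈ Set.Icc (0 : ℝ) 1)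
    (hdist : ∀ i j : Fin 3, (![E₁, E₂, E₃] i) (![ω₁, ω₂, ω₃] j)
      = if i = j then 1 else 0)
    (hsum : E₁ + E₂ + E₃ = U) :
    False :=
  stmt_14_general k S hNSE ω₁ ω₂ ω₃ h1 h2 h3 E₁ E₂ E₃ hE1 hE2 hdist
end

section
/- The only closed connected subgroup of SO(3) that acts transitively on the unit sphere S² ⊆ ℝ³ is SO(3) itself. -/
/-!
A rotation `g ∈ SO(3)` is determined up to inversion by its axis and its trace `1 + 2 cos θ`.
The connected set `G` contains `1` (trace `3`) and, by transitivity, a half-turn (trace `-1`),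
so by the intermediate value theorem it contains an element of every trace in `[-1, 3]`.
Transitivity lets us conjugate, inside `G`, the axis of that element onto the axis of `g`,
which produces `g` or `g⁻¹ = gᵀ` in `G`.
-/

open Matrix

namespace Matrix

variable {n : Type*} [Fintype n] [DecidableEq n]

theorem transpose_mulVec_mulVec_of_transpose_mul_self {A : Matrix n n ℝ} (hA : Aᵀ * A = 1)
    (v : n → ℝ) : Aᵀ *ᵥ (A *ᵥ v) = v := by
  rw [mulVec_mulVec, hA, one_mulVec]

theorem det_sub_one_eq_zero_of_odd_card {A : Matrix n n ℝ} (hA : Aᵀ * A = 1) (hdet : A.det = 1)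
    (hn : Odd (Fintype.card n)) : (A - 1).det = 0 := by
  have h : (A - 1).det = -(A - 1).det := calc
    (A - 1).det = Aᵀ.det * (A - 1).det := by rw [det_transpose, hdet, one_mul]
    _ = (1 - A)ᵀ.det := by rw [← det_mul, mul_sub, hA, mul_one, transpose_sub, transpose_one]
    _ = -(A - 1).det := by rw [det_transpose, ← neg_sub, det_neg, hn.neg_one_pow, neg_one_mul]
  linarith

theorem exists_sum_sq_eq_one_mulVec_eq_self {A : Matrix n n ℝ} (hA : Aᵀ * A = 1)
    (hdet : A.det = 1) (hn : Odd (Fintype.card n)) :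
    ∃ u : n → ℝ, ∑ i, u i ^ 2 = 1 ∧ A *ᵥ u = u := by
  obtain ⟨v, hv0, hv⟩ := exists_mulVec_eq_zero_iff.mpr (det_sub_one_eq_zero_of_odd_card hA hdet hn)
  rw [sub_mulVec, one_mulVec, sub_eq_zero] at hv
  have hpos : 0 < ∑ i, v i ^ 2 := by
    obtain ⟨i, hi⟩ := Function.ne_iff.mp hv0
    exact Finset.sum_pos' (fun j _ => sq_nonneg (v j)) ⟨i, Finset.mem_univ i, sq_pos_of_ne_zero hi⟩
  refine ⟨(√(∑ i, v i ^ 2))⁻¹ • v, ?_, by rw [mulVec_smul, hv]⟩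
  simp only [Pi.smul_apply, smul_eq_mul, mul_pow, ← Finset.mul_sum, inv_pow,
    Real.sq_sqrt hpos.le]
  exact inv_mul_cancel₀ hpos.ne'

theorem orthogonal_transpose_mul_mul {Q A : Matrix n n ℝ} (hQ : Qᵀ * Q = 1) (hA : Aᵀ * A = 1) :
    (Qᵀ * A * Q)ᵀ * (Qᵀ * A * Q) = 1 := by
  have hQ' : Q * Qᵀ = 1 := mul_eq_one_comm.mp hQ
  simp only [transpose_mul, transpose_transpose]
  calc Qᵀ * (Aᵀ * Q) * (Qᵀ * A * Q) = Qᵀ * (Aᵀ * (Q * Qᵀ) * A) * Q := by noncomm_ring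
    _ = 1 := by rw [hQ', mul_one, hA, mul_one, hQ]

theorem det_transpose_mul_mul {Q : Matrix n n ℝ} (hQ : Qᵀ * Q = 1) (A : Matrix n n ℝ) :
    (Qᵀ * A * Q).det = A.det := by
  rw [det_mul, det_mul, mul_right_comm, ← det_mul, hQ, det_one, one_mul]

theorem trace_transpose_mul_mul {Q : Matrix n n ℝ} (hQ : Qᵀ * Q = 1) (A : Matrix n n ℝ) :
    (Qᵀ * A * Q).trace = A.trace := by
  rw [trace_mul_cycle, mul_eq_one_comm.mp hQ, one_mul]

end Matrix

local notation "e₃" => (![0, 0, 1] : Fin 3 → ℝ)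

def rotZ (a c : ℝ) : Matrix (Fin 3) (Fin 3) ℝ := !![a, -c, 0; c, a, 0; 0, 0, 1]

theorem trace_rotZ (a c : ℝ) : (rotZ a c).trace = 2 * a + 1 := by
  simp [rotZ, trace_fin_three]; ring

theorem transpose_rotZ (a c : ℝ) : (rotZ a c)ᵀ = rotZ a (-c) := by
  ext i j; fin_cases i <;> fin_cases j <;> simp [rotZ]

theorem exists_eq_block_of_mulVec_e3 {w : Matrix (Fin 3) (Fin 3) ℝ} (hw : wᵀ * w = 1) {s : ℝ}
    (h : w *ᵥ e₃ = ![0, 0, s]) : ∃ a b c d : ℝ, a ^ 2 + c ^ 2 = 1 ∧ b ^ 2 + d ^ 2 = 1 ∧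
      w = !![a, b, 0; c, d, 0; 0, 0, s] := by
  have c0 : w 0 2 = 0 := by simpa [mulVec, dotProduct, Fin.sum_univ_three] using congrFun h 0
  have c1 : w 1 2 = 0 := by simpa [mulVec, dotProduct, Fin.sum_univ_three] using congrFun h 1
  have c2 : w 2 2 = s := by simpa [mulVec, dotProduct, Fin.sum_univ_three] using congrFun h 2
  have diag (M : Matrix (Fin 3) (Fin 3) ℝ) (hM : M = 1) (i : Fin 3) : M i i = 1 := by
    rw [hM, one_apply_eq]
  have h22 := diag _ hw 2
  have h22' := diag _ (mul_eq_one_comm.mp hw) 2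
  have h00 := diag _ hw 0
  have h11 := diag _ hw 1
  simp only [mul_apply, Fin.sum_univ_three, transpose_apply] at h22 h22' h00 h11
  -- the third column gives `s ^ 2 = 1`, which leaves no room in the unit third row
  have r0 : w 2 0 = 0 := by nlinarith
  have r1 : w 2 1 = 0 := by nlinarith
  refine ⟨w 0 0, w 0 1, w 1 0, w 1 1, by nlinarith, by nlinarith, ?_⟩
  conv_lhs => rw [eta_fin_three w]
  rw [c0, c1, c2, r0, r1]

theorem exists_eq_rotZ {w : Matrix (Fin 3) (Fin 3) ℝ} (hw : wᵀ * w = 1) (hdet : w.det = 1)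
    (h : w *ᵥ e₃ = e₃) : ∃ a c : ℝ, a ^ 2 + c ^ 2 = 1 ∧ w = rotZ a c := by
  obtain ⟨a, b, c, d, hac, hbd, rfl⟩ := exists_eq_block_of_mulVec_e3 hw h
  replace hdet : a * d - b * c = 1 := by simpa [det_fin_three] using hdet
  have hsq : (a - d) ^ 2 + (b + c) ^ 2 = 0 := by linear_combination hac + hbd - 2 * hdet
  have hda : d = a := by nlinarith
  have hbc : b = -c := by nlinarith
  exact ⟨a, c, hac, by rw [hda, hbc, rotZ]⟩

theorem trace_eq_neg_one_of_mulVec_e3 {w : Matrix (Fin 3) (Fin 3) ℝ} (hw : wᵀ * w = 1)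
    (hdet : w.det = 1) (h : w *ᵥ e₃ = ![0, 0, -1]) : w.trace = -1 := by
  obtain ⟨a, b, c, d, hac, hbd, rfl⟩ := exists_eq_block_of_mulVec_e3 hw h
  replace hdet : a * d - b * c = -1 := by simp [det_fin_three] at hdet; linarith
  have hsq : (a + d) ^ 2 + (b - c) ^ 2 = 0 := by linear_combination hac + hbd + 2 * hdet
  have had : a + d = 0 := by nlinarith
  simp [trace_fin_three]
  linarith

section TransitiveSubgroup

variable {G : Set (Matrix (Fin 3) (Fin 3) ℝ)}

theorem exists_mem_transpose_mul_mul_mulVec_e3 (hG : ∀ g ∈ G, gᵀ * g = 1)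
    (htrans : ∀ u v : Fin 3 → ℝ, (∑ i, u i ^ 2) = 1 → (∑ i, v i ^ 2) = 1 → ∃ g ∈ G, g *ᵥ u = v)
    {k : Matrix (Fin 3) (Fin 3) ℝ} (hk : kᵀ * k = 1) (hdet : k.det = 1) :
    ∃ h ∈ G, (hᵀ * k * h) *ᵥ e₃ = e₃ := by
  obtain ⟨u, hu, hku⟩ := exists_sum_sq_eq_one_mulVec_eq_self hk hdet (by decide)
  obtain ⟨h, hG', hhu⟩ := htrans e₃ u (by simp [Fin.sum_univ_three]) hu
  refine ⟨h, hG', ?_⟩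
  rw [← mulVec_mulVec, ← mulVec_mulVec, hhu, hku, ← hhu,
    transpose_mulVec_mulVec_of_transpose_mul_self (hG h hG')]

theorem mem_of_transpose_mul_mul_mem (hmul : ∀ g ∈ G, ∀ h ∈ G, g * h ∈ G)
    (hinv : ∀ g ∈ G, gᵀ ∈ G) {g h : Matrix (Fin 3) (Fin 3) ℝ} (hh : h ∈ G) (hhh : hᵀ * h = 1)
    (hg : hᵀ * g * h ∈ G) : g ∈ G := by
  have hg_eq : g = h * (hᵀ * g * h) * hᵀ := calc
    g = (h * hᵀ) * g * (h * hᵀ) := by rw [mul_eq_one_comm.mp hhh, one_mul, mul_one]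
    _ = h * (hᵀ * g * h) * hᵀ := by noncomm_ring
  rw [hg_eq]
  exact hmul _ (hmul _ hh _ hg) _ (hinv _ hh)

theorem rotZ_mem (hone : (1 : Matrix (Fin 3) (Fin 3) ℝ) ∈ G)
    (hmul : ∀ g ∈ G, ∀ h ∈ G, g * h ∈ G) (hinv : ∀ g ∈ G, gᵀ ∈ G)
    (hSO : ∀ g ∈ G, gᵀ * g = 1 ∧ g.det = 1) (hconn : IsPreconnected G)
    (htrans : ∀ u v : Fin 3 → ℝ, (∑ i, u i ^ 2) = 1 → (∑ i, v i ^ 2) = 1 → ∃ g ∈ G, g *ᵥ u = v)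
    {a c : ℝ} (hac : a ^ 2 + c ^ 2 = 1) : rotZ a c ∈ G := by
  obtain ⟨w, hw, hwe⟩ := htrans e₃ ![0, 0, -1] (by simp [Fin.sum_univ_three])
    (by simp [Fin.sum_univ_three])
  have hwtr := trace_eq_neg_one_of_mulVec_e3 (hSO w hw).1 (hSO w hw).2 hwe
  obtain ⟨k, hk, hktr⟩ : ∃ k ∈ G, k.trace = 2 * a + 1 := by
    refine hconn.intermediate_value hw hone continuous_id.matrix_trace.continuousOn ?_
    dsimp only [id]
    rw [hwtr, trace_one, Fintype.card_fin]
    constructor <;> norm_num <;> nlinarith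
  obtain ⟨h, hh, hke⟩ := exists_mem_transpose_mul_mul_mulVec_e3 (fun g hg => (hSO g hg).1)
    htrans (hSO k hk).1 (hSO k hk).2
  have hk' : hᵀ * k * h ∈ G := hmul _ (hmul _ (hinv h hh) _ hk) _ hh
  obtain ⟨a', c', hac', hk'eq⟩ := exists_eq_rotZ (hSO _ hk').1 (hSO _ hk').2 hke
  have haa : a' = a := by
    have := trace_transpose_mul_mul (hSO h hh).1 k
    rw [hk'eq, trace_rotZ, hktr] at this
    linarith
  subst haa
  rcases sq_eq_sq_iff_eq_or_eq_neg.mp (show c ^ 2 = c' ^ 2 by linarith) with rfl | rfl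
  · rwa [← hk'eq]
  · rw [← transpose_rotZ, ← hk'eq]
    exact hinv _ hk'

end TransitiveSubgroup

theorem stmt_15_general (G : Set (Matrix (Fin 3) (Fin 3) ℝ))
    (hone : (1 : Matrix (Fin 3) (Fin 3) ℝ) ∈ G)
    (hmul : ∀ g ∈ G, ∀ h ∈ G, g * h ∈ G)
    (hinv : ∀ g ∈ G, gᵀ ∈ G)
    (hSO : ∀ g ∈ G, gᵀ * g = 1 ∧ g.det = 1)
    (hconn : IsConnected G)
    (htrans : ∀ u v : Fin 3 → ℝ, (∑ i, u i ^ 2) = 1 → (∑ i, v i ^ 2) = 1 →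
      ∃ g ∈ G, g *ᵥ u = v) :
    G = {g : Matrix (Fin 3) (Fin 3) ℝ | gᵀ * g = 1 ∧ g.det = 1} := by
  refine Set.Subset.antisymm hSO fun g ⟨hg, hdet⟩ => ?_
  obtain ⟨h, hh, hge⟩ :=
    exists_mem_transpose_mul_mul_mulVec_e3 (fun g hg => (hSO g hg).1) htrans hg hdet
  have hho := (hSO h hh).1
  obtain ⟨a, c, hac, hg'⟩ := exists_eq_rotZ (orthogonal_transpose_mul_mul hho hg)
    (by rw [det_transpose_mul_mul hho, hdet]) hge
  refine mem_of_transpose_mul_mul_mem hmul hinv hh hho ?_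
  rw [hg']
  exact rotZ_mem hone hmul hinv hSO hconn.isPreconnected htrans hac

/-- The only closed connected subgroup of `SO(3)` acting transitively on the
unit sphere `S² ⊆ ℝ³` is `SO(3)` itself. -/
theorem stmt_15 (G : Set (Matrix (Fin 3) (Fin 3) ℝ))
    (hone : (1 : Matrix (Fin 3) (Fin 3) ℝ) ∈ G)
    (hmul : ∀ g ∈ G, ∀ h ∈ G, g * h ∈ G)
    (hinv : ∀ g ∈ G, gᵀ ∈ G)
    (hSO : ∀ g ∈ G, gᵀ * g = 1 ∧ g.det = 1)
    (hclosed : IsClosed G) (hconn : IsConnected G)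
    (htrans : ∀ u v : Fin 3 → ℝ, (∑ i, u i ^ 2) = 1 → (∑ i, v i ^ 2) = 1 →
      ∃ g ∈ G, g *ᵥ u = v) :
    G = {g : Matrix (Fin 3) (Fin 3) ℝ | gᵀ * g = 1 ∧ g.det = 1} :=
  stmt_15_general G hone hmul hinv hSO hconn htrans
end
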